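/- arXiv:2112.05177 — 6 statements merged into one kernel-verified Lean document; each statement's English description precedes it below -/
import Mathlib

section
/- If A is a left partial H-module algebra, then the set of left invariants A^H = {a ∈ A : h·a = a(h·1_A) for all h ∈ H} is contained in the set of right invariants A^{H,r} = {a ∈ A : h·a = (h·1_A)a for all h ∈ H}. -/
open TensorProduct LinearMap

noncomputable section

variable (k : Type*) [Field k]
variable (H : Type*) [Ring H] [HopfAlgebra k H]
variable (A : Type*) [Ring A] [Algebra k A]

/-- A left partial action of a Hopf algebra `H` on an algebra `A` (Caenepeel–Janssen):
(PA1) `h·(ab) = (h₁·a)(h₂·b)`, (PA2) `1·a = a`, (PA3) `h·(g·a) = (h₁·1)((h₂g)·a)`. -/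
structure PartialAction where
  act : H →ₗ[k] A →ₗ[k] A
  pa1 : ∀ a b : A, act.flip (a * b) =
    LinearMap.mul' k A ∘ₗ TensorProduct.map (act.flip a) (act.flip b) ∘ₗ Coalgebra.comul
  pa2 : ∀ a : A, act 1 a = a
  pa3 : ∀ (g : H) (a : A), act.flip (act g a) =
    LinearMap.mul' k A ∘ₗ
      TensorProduct.map (act.flip 1) ((act.flip a) ∘ₗ LinearMap.mulRight k g) ∘ₗ Coalgebra.comul

variable {k H A}

/-- (PA4): the partial action is symmetric: `h·(g·a) = ((h₁g)·a)(h₂·1)`. -/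
def PartialAction.IsSymmetric (α : PartialAction k H A) : Prop :=
  ∀ (g : H) (a : A), α.act.flip (α.act g a) =
    LinearMap.mul' k A ∘ₗ
      TensorProduct.map ((α.act.flip a) ∘ₗ LinearMap.mulRight k g) (α.act.flip 1) ∘ₗ
        Coalgebra.comul

/-- Left invariants `A^H`. -/
def PartialAction.leftInv (α : PartialAction k H A) : Set A :=
  {a | ∀ h : H, α.act h a = a * α.act h 1}

/-- Right invariants `A^{H,r}`. -/
def PartialAction.rightInv (α : PartialAction k H A) : Set A :=
  {a | ∀ h : H, α.act h a = α.act h 1 * a}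

/-- `t` is a left integral in `H`. -/
def IsLeftIntegral (t : H) : Prop := ∀ h : H, h * t = Coalgebra.counit (R := k) h • t

/-- `t` is a right integral in `H`. -/
def IsRightIntegral (t : H) : Prop := ∀ h : H, t * h = Coalgebra.counit (R := k) h • t

/-- Convolution product on the dual `H* = H →ₗ[k] k`. -/
def conv (f g : H →ₗ[k] k) : H →ₗ[k] k :=
  LinearMap.mul' k k ∘ₗ TensorProduct.map f g ∘ₗ Coalgebra.comul

/-- `T ∈ H*` is a right integral: `T ∗ f = f(1) T`. -/
def IsRightIntegralDual (T : H →ₗ[k] k) : Prop := ∀ f : H →ₗ[k] k, conv T f = f 1 • T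

/-- `T ∈ H*` is a left integral: `f ∗ T = f(1) T`. -/
def IsLeftIntegralDual (T : H →ₗ[k] k) : Prop := ∀ f : H →ₗ[k] k, conv f T = f 1 • T

namespace PartialAction

variable (α : PartialAction k H A)

/-- `ψ (h ⊗ b) = Σ (h₁·b) ⊗ h₂`. -/
def psi : H ⊗[k] A →ₗ[k] A ⊗[k] H :=
  TensorProduct.map (TensorProduct.lift α.act) LinearMap.id
    ∘ₗ (TensorProduct.assoc k H A H).symm.toLinearMap
    ∘ₗ TensorProduct.map LinearMap.id (TensorProduct.comm k H A).toLinearMap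
    ∘ₗ (TensorProduct.assoc k H H A).toLinearMap
    ∘ₗ TensorProduct.map Coalgebra.comul LinearMap.id

/-- The smash product multiplication on `A ⊗ H`:
`(a # h)(b # g) = a(h₁·b) # h₂g`, as a linear map on the tensor square. -/
def smashMul' : (A ⊗[k] H) ⊗[k] (A ⊗[k] H) →ₗ[k] A ⊗[k] H :=
  TensorProduct.map (LinearMap.mul' k A) (LinearMap.mul' k H)
    ∘ₗ (TensorProduct.assoc k A A (H ⊗[k] H)).symm.toLinearMap
    ∘ₗ TensorProduct.map LinearMap.id
        ((TensorProduct.assoc k A H H).toLinearMap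
          ∘ₗ TensorProduct.map α.psi LinearMap.id
          ∘ₗ (TensorProduct.assoc k H A H).symm.toLinearMap)
    ∘ₗ (TensorProduct.assoc k A H (A ⊗[k] H)).toLinearMap

/-- The smash product multiplication, curried. -/
def sm : (A ⊗[k] H) →ₗ[k] (A ⊗[k] H) →ₗ[k] A ⊗[k] H := TensorProduct.curry α.smashMul'

/-- `1 # 1`. -/
def unit : A ⊗[k] H := (1 : A) ⊗ₜ[k] (1 : H)

/-- `j x = x · (1 # 1)`; the element `a #̲ h` of the partial smash product. -/
def j : A ⊗[k] H →ₗ[k] A ⊗[k] H := α.sm.flip (unit)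

/-- The partial smash product `A #̲ H`, as a subspace of `A ⊗ H`. -/
def smash : Submodule k (A ⊗[k] H) := LinearMap.range α.j

/-- The action of `A # H` on `A`: `(a # h) ▸ b = a (h·b)`. -/
def act2 : A ⊗[k] H →ₗ[k] A →ₗ[k] A :=
  TensorProduct.curry (LinearMap.mul' k A
    ∘ₗ TensorProduct.map LinearMap.id (TensorProduct.lift α.act)
    ∘ₗ (TensorProduct.assoc k A H A).toLinearMap)

end PartialAction

/-- `Φ(a # h) = a T(h)`. -/
def PhiMap (T : H →ₗ[k] k) : A ⊗[k] H →ₗ[k] A :=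
  (TensorProduct.rid k A).toLinearMap ∘ₗ TensorProduct.map LinearMap.id T

/-- `θ(f) = f(t₁) t₂`. -/
def thetaMap (t : H) : (H →ₗ[k] k) →ₗ[k] H :=
  (TensorProduct.lid k H).toLinearMap
    ∘ₗ LinearMap.applyₗ (Coalgebra.comul (R := k) t)
    ∘ₗ (TensorProduct.mapBilinear (RingHom.id k) H H k H).flip LinearMap.id

/-! For `a ∈ A^H`, (PA1) lets `a` be pulled out of any action: `h·(ac) = a(h·c)`.
(PA3) together with `h₁S(h₂) = ε(h)1` gives `h₁·(S(h₂)·b) = (h·1)b` for every `b`. Hence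
`h·a = a(h·1) = a(h₁·(S(h₂)·1)) = h₁·(S(h₂)·a) = (h·1)a`. -/

theorem Coalgebra.sum_counit_right_smul {R C ι : Type*} [CommSemiring R] [AddCommMonoid C]
    [Module R C] [Coalgebra R C] {c : C} (𝓡 : Coalgebra.Repr R c ι) :
    ∑ i ∈ 𝓡.index, Coalgebra.counit (R := R) (𝓡.right i) • 𝓡.left i = c := by
  simpa only [map_sum, _root_.TensorProduct.rid_tmul, one_smul]
    using congrArg (_root_.TensorProduct.rid R C) (Coalgebra.sum_tmul_counit_eq 𝓡)

namespace PartialAction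

variable (α : PartialAction k H A) {ι : Type*}

theorem act_mul_eq_sum (a b : A) {h : H} (𝓡 : Coalgebra.Repr k h ι) :
    α.act h (a * b) = ∑ i ∈ 𝓡.index, α.act (𝓡.left i) a * α.act (𝓡.right i) b := by
  simpa [← 𝓡.eq, map_sum] using LinearMap.congr_fun (α.pa1 a b) h

theorem act_act_eq_sum (g : H) (a : A) {h : H} (𝓡 : Coalgebra.Repr k h ι) :
    α.act h (α.act g a) = ∑ i ∈ 𝓡.index, α.act (𝓡.left i) 1 * α.act (𝓡.right i * g) a := by
  simpa [← 𝓡.eq, map_sum] using LinearMap.congr_fun (α.pa3 g a) h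

theorem act_mul_of_mem_leftInv {a : A} (ha : a ∈ α.leftInv) (h : H) (c : A) :
    α.act h (a * c) = a * α.act h c := by
  let 𝓡 := Coalgebra.Repr.arbitrary k h
  calc α.act h (a * c)
      = ∑ i ∈ 𝓡.index, a * (α.act (𝓡.left i) 1 * α.act (𝓡.right i) c) := by
        simp only [act_mul_eq_sum α a c 𝓡, ha _, mul_assoc]
    _ = a * α.act h c := by
        rw [← Finset.mul_sum, ← act_mul_eq_sum α 1 c 𝓡, one_mul]

theorem sum_act_act_antipode (b : A) {h : H} (𝓡 : Coalgebra.Repr k h ι) :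
    ∑ i ∈ 𝓡.index, α.act (𝓡.left i) (α.act (HopfAlgebra.antipode k (𝓡.right i)) b) =
      α.act h 1 * b := by
  let S := HopfAlgebra.antipode k (A := H)
  -- `Ψ` transports coassociativity `h₁₁ ⊗ h₁₂ ⊗ h₂ = h₁ ⊗ h₂₁ ⊗ h₂₂` to the sums below.
  let Ψ : H ⊗[k] (H ⊗[k] H) →ₗ[k] A := LinearMap.mul' k A ∘ₗ
    TensorProduct.map (α.act.flip 1) (α.act.flip b ∘ₗ LinearMap.mul' k H ∘ₗ S.lTensor H)
  have hΨ (x y z : H) : Ψ (x ⊗ₜ (y ⊗ₜ z)) = α.act x 1 * α.act (y * S z) b := by simp [Ψ]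
  let 𝓡₁ i := Coalgebra.Repr.arbitrary k (𝓡.left i)
  let 𝓡₂ i := Coalgebra.Repr.arbitrary k (𝓡.right i)
  calc ∑ i ∈ 𝓡.index, α.act (𝓡.left i) (α.act (S (𝓡.right i)) b)
      = ∑ i ∈ 𝓡.index, ∑ j ∈ (𝓡₁ i).index,
          α.act ((𝓡₁ i).left j) 1 * α.act ((𝓡₁ i).right j * S (𝓡.right i)) b :=
        Finset.sum_congr rfl fun i _ => α.act_act_eq_sum _ b (𝓡₁ i)
    _ = ∑ i ∈ 𝓡.index, ∑ j ∈ (𝓡₂ i).index,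
          α.act (𝓡.left i) 1 * α.act ((𝓡₂ i).left j * S ((𝓡₂ i).right j)) b := by
        simpa only [map_sum, hΨ] using congrArg Ψ (Coalgebra.sum_tmul_tmul_eq 𝓡 𝓡₁ 𝓡₂)
    _ = ∑ i ∈ 𝓡.index, Coalgebra.counit (R := k) (𝓡.right i) • (α.act (𝓡.left i) 1 * b) := by
        refine Finset.sum_congr rfl fun i _ => ?_
        rw [← Finset.mul_sum, ← LinearMap.sum_apply, ← map_sum,
          HopfAlgebra.sum_mul_antipode_eq_smul, map_smul, LinearMap.smul_apply, α.pa2,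
          mul_smul_comm]
    _ = α.act h 1 * b := by
        conv_rhs => rw [← Coalgebra.sum_counit_right_smul 𝓡]
        simp only [map_sum, map_smul, LinearMap.sum_apply, LinearMap.smul_apply, Finset.sum_mul,
          smul_mul_assoc]

end PartialAction

/-- the left invariants are contained in the right invariants. -/
theorem leftInv_subset_rightInv
    {k : Type*} [Field k] {H : Type*} [Ring H] [HopfAlgebra k H]
    {A : Type*} [Ring A] [Algebra k A] (α : PartialAction k H A) :
    α.leftInv ⊆ α.rightInv := by
  intro a ha h
  let 𝓡 := Coalgebra.Repr.arbitrary k h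
  calc α.act h a = a * α.act h 1 := ha h
    _ = a * ∑ i ∈ 𝓡.index, α.act (𝓡.left i) (α.act (HopfAlgebra.antipode k (𝓡.right i)) 1) := by
        rw [α.sum_act_act_antipode 1 𝓡, mul_one]
    _ = ∑ i ∈ 𝓡.index, α.act (𝓡.left i) (α.act (HopfAlgebra.antipode k (𝓡.right i)) a) := by
        rw [Finset.mul_sum]
        refine Finset.sum_congr rfl fun i _ => ?_
        rw [ha, α.act_mul_of_mem_leftInv ha]
    _ = α.act h 1 * a := α.sum_act_act_antipode a 𝓡

end
end

section
/- If the antipode S is bijective and A is a left symmetric partial H-module algebra, then for all a, b ∈ A and h ∈ H: a(h·b) = h₂·((S⁻¹(h₁)·a)b). -/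
open TensorProduct LinearMap

noncomputable section

variable (k : Type*) [Field k]
variable (H : Type*) [Ring H] [HopfAlgebra k H]
variable (A : Type*) [Ring A] [Algebra k A]

variable {k H A}

/-!
Read in the convolution algebra of linear maps `H → A`, PA1, PA4 and PA3 (at `1·b = b`) say
`g·(xy) = (g₁·x)(g₂·y)`, `g·(m·c) = ((g₁m)·c)(g₂·1)` and `g·b = (g₁·1)(g₂·b)`, so
associativity of convolution gives `g·((m·c)b) = ((g₁m)·c)(g₂·b)`. With `g = h₂` and
`m = S⁻¹(h₁)` the right-hand side becomes `((h₂S⁻¹(h₁))·a)(h₃·b)`. Applying the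
anti-homomorphism `S⁻¹` to `h₁S(h₂) = ε(h)1` and using coassociativity gives
`h₂S⁻¹(h₁) ⊗ h₃ = 1 ⊗ h`, which leaves `(1·a)(h·b) = a(h·b)`.
-/

namespace HopfAlgebra

open Coalgebra Function

variable {R H ι : Type*} [CommSemiring R] [Semiring H] [HopfAlgebra R H] {S' : H →ₗ[R] H}

theorem mul_antidistrib_of_antipode_inverse (hl : LeftInverse S' (antipode R))
    (hr : RightInverse S' (antipode R)) (x y : H) : S' (x * y) = S' y * S' x :=
  hl.injective <| by rw [antipode_mul_antidistrib, hr, hr, hr]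

theorem sum_mul_antipode_inverse_eq_smul (hl : LeftInverse S' (antipode R))
    (hr : RightInverse S' (antipode R)) {a : H} (r : Repr R a ι) :
    ∑ i ∈ r.index, r.right i * S' (r.left i) = counit (R := R) a • 1 := by
  have h1 : S' 1 = 1 := by simpa using hl 1
  simpa [mul_antidistrib_of_antipode_inverse hl hr, hl.eq, h1] using
    congrArg S' (sum_mul_antipode_eq_smul r)

theorem sum_sum_mul_antipode_inverse_tmul_eq {κ : ι → Type*} (hl : LeftInverse S' (antipode R))
    (hr : RightInverse S' (antipode R)) {a : H} (r : Repr R a ι)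
    (s : ∀ i, Repr R (r.right i) (κ i)) :
    ∑ i ∈ r.index, ∑ j ∈ (s i).index, ((s i).left j * S' (r.left i)) ⊗ₜ[R] (s i).right j =
      1 ⊗ₜ[R] a := by
  let F : H ⊗[R] (H ⊗[R] H) →ₗ[R] H ⊗[R] H :=
    TensorProduct.map (LinearMap.mul' R H ∘ₗ (TensorProduct.comm R H H).toLinearMap ∘ₗ
      S'.rTensor H) LinearMap.id ∘ₗ (TensorProduct.assoc R H H H).symm.toLinearMap
  have hF (x y z : H) : F (x ⊗ₜ (y ⊗ₜ z)) = (y * S' x) ⊗ₜ z := by simp [F]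
  let t i := ℛ R (r.left i)
  calc _ = F (∑ i ∈ r.index, ∑ j ∈ (s i).index, r.left i ⊗ₜ ((s i).left j ⊗ₜ (s i).right j)) := by
        simp only [map_sum, hF]
    _ = F (∑ i ∈ r.index, ∑ j ∈ (t i).index, (t i).left j ⊗ₜ ((t i).right j ⊗ₜ r.right i)) := by
        rw [sum_tmul_tmul_eq r t s]
    _ = ∑ i ∈ r.index, (∑ j ∈ (t i).index, (t i).right j * S' ((t i).left j)) ⊗ₜ r.right i := by
        simp only [map_sum, hF, sum_tmul]
    _ = 1 ⊗ₜ[R] a := by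
        simp only [sum_mul_antipode_inverse_eq_smul hl hr, smul_tmul, ← tmul_sum, sum_counit_smul]

end HopfAlgebra

namespace PartialAction

open Coalgebra WithConv

variable {k H A : Type*} [Field k] [Ring H] [HopfAlgebra k H] [Ring A] [Algebra k A]
  (α : PartialAction k H A)

theorem toConv_act_flip_mul (x y : A) :
    toConv (α.act.flip (x * y)) = toConv (α.act.flip x) * toConv (α.act.flip y) :=
  congrArg toConv (α.pa1 x y)

theorem toConv_act_flip_one_mul (b : A) :
    toConv (α.act.flip 1) * toConv (α.act.flip b) = toConv (α.act.flip b) := by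
  have h := α.pa3 1 b
  rw [α.pa2, LinearMap.mulRight_one, LinearMap.comp_id] at h
  exact congrArg toConv h.symm

theorem IsSymmetric.toConv_act_flip_act {α : PartialAction k H A} (hsym : α.IsSymmetric)
    (m : H) (c : A) :
    toConv (α.act.flip (α.act m c)) =
      toConv (α.act.flip c ∘ₗ LinearMap.mulRight k m) * toConv (α.act.flip 1) :=
  congrArg toConv (hsym m c)

theorem IsSymmetric.toConv_act_flip_act_mul {α : PartialAction k H A} (hsym : α.IsSymmetric)
    (m : H) (c b : A) :
    toConv (α.act.flip (α.act m c * b)) =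
      toConv (α.act.flip c ∘ₗ LinearMap.mulRight k m) * toConv (α.act.flip b) := by
  rw [toConv_act_flip_mul, hsym.toConv_act_flip_act, mul_assoc, toConv_act_flip_one_mul]

theorem IsSymmetric.act_act_mul_eq_sum {ι : Type*} {α : PartialAction k H A}
    (hsym : α.IsSymmetric) (m : H) (c b : A) {g : H} (r : Repr k g ι) :
    α.act g (α.act m c * b) = ∑ i ∈ r.index, α.act (r.left i * m) c * α.act (r.right i) b := by
  simpa using congr($(hsym.toConv_act_flip_act_mul m c b) g).trans (r.convMul_apply _ _)

end PartialAction

open Coalgebra in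
/-- for a symmetric partial action with bijective antipode,
`a (h·b) = Σ h₂ · ((S⁻¹(h₁)·a) b)`. -/
theorem symmetric_action_formula
    {k : Type*} [Field k] {H : Type*} [Ring H] [HopfAlgebra k H]
    {A : Type*} [Ring A] [Algebra k A] (α : PartialAction k H A)
    (hsym : α.IsSymmetric) (Sinv : H →ₗ[k] H)
    (hS1 : ∀ x : H, Sinv (HopfAlgebra.antipode (R := k) x) = x)
    (hS2 : ∀ x : H, HopfAlgebra.antipode (R := k) (Sinv x) = x)
    (a b : A) (h : H) :
    a * α.act h b =
      TensorProduct.lift α.act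
        ((TensorProduct.comm k A H)
          ((TensorProduct.map
              ((LinearMap.mulRight k b) ∘ₗ (α.act.flip a) ∘ₗ Sinv) LinearMap.id)
            (Coalgebra.comul (R := k) h))) := by
  let r := ℛ k h
  let s i := ℛ k (r.right i)
  let G := LinearMap.mul' k A ∘ₗ TensorProduct.map (α.act.flip a) (α.act.flip b)
  calc a * α.act h b = G (1 ⊗ₜ h) := by simp [G, α.pa2]
    _ = G (∑ i ∈ r.index, ∑ j ∈ (s i).index,
          ((s i).left j * Sinv (r.left i)) ⊗ₜ (s i).right j) := by
        rw [HopfAlgebra.sum_sum_mul_antipode_inverse_tmul_eq hS1 hS2]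
    _ = ∑ i ∈ r.index, α.act (r.right i) (α.act (Sinv (r.left i)) a * b) := by
        simp [G, map_sum, hsym.act_act_mul_eq_sum _ _ _ (s _)]
    _ = _ := by
        rw [← r.eq]
        simp [map_sum]
end
end

section
/- Let H be a finite-dimensional Hopf algebra, T a right integral in H* and t a left integral in H with T(t) = 1. Then T(S(h)t₁)t₂ = h for all h ∈ H. -/
open TensorProduct LinearMap

noncomputable section

variable (k : Type*) [Field k]
variable (H : Type*) [Ring H] [HopfAlgebra k H]
variable (A : Type*) [Ring A] [Algebra k A]

variable {k H A}

/-!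
For a left integral `t`, `(S h ⊗ 1) Δt = (1 ⊗ h) Δt`: expand `1 ⊗ h = Σ (S h₁ ⊗ 1) Δh₂` and absorb
`Δh₂` into `Δt`, using `h₂ t = ε(h₂) t`. For a right integral `T` of `H*`, `(T ⊗ id) Δx = T(x) 1`,
because every `f ∈ H*` takes the value `(T ∗ f)(x) = f(1) T(x)` on the left-hand side. Applying
`T ⊗ id` to the first identity gives `T(S(h) t₁) t₂ = h T(t₁) t₂ = T(t) h = h`.
-/

namespace Coalgebra

variable {R C : Type*} [CommSemiring R] [AddCommMonoid C] [Module R C] [Coalgebra R C]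
  {ι : Type*} {c : C}

lemma sum_counit_right_smul_left (𝓡 : Repr R c ι) :
    ∑ i ∈ 𝓡.index, counit (R := R) (𝓡.right i) • 𝓡.left i = c := by
  simpa only [map_sum, TensorProduct.lift.tmul, LinearMap.flip_apply, LinearMap.lsmul_apply,
    one_smul] using congr(TensorProduct.lift (LinearMap.lsmul R C).flip $(sum_tmul_counit_eq 𝓡))

end Coalgebra

namespace HopfAlgebra

open Coalgebra

variable {R B : Type*} [CommSemiring R] [Semiring B] [HopfAlgebra R B] {ι : Type*} {b : B}

lemma sum_antipode_tmul_one_mul_comul (𝓡 : Repr R b ι) :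
    ∑ i ∈ 𝓡.index, (antipode R (𝓡.left i) ⊗ₜ[R] (1 : B)) * comul (𝓡.right i) = 1 ⊗ₜ b := by
  let φ : B ⊗[R] (B ⊗[R] B) →ₗ[R] B ⊗[R] B :=
    TensorProduct.map (LinearMap.mul' R B ∘ₗ (antipode R).rTensor B) LinearMap.id ∘ₗ
      (TensorProduct.assoc R B B B).symm.toLinearMap
  have hcoassoc := congr(φ $(sum_tmul_tmul_eq 𝓡 (fun i ↦ ℛ R (𝓡.left i))
    (fun i ↦ ℛ R (𝓡.right i))))
  simp only [φ, map_sum, LinearMap.comp_apply, LinearEquiv.coe_coe,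
    TensorProduct.assoc_symm_tmul, TensorProduct.map_tmul, LinearMap.rTensor_tmul,
    LinearMap.mul'_apply, LinearMap.id_apply, ← TensorProduct.sum_tmul,
    sum_antipode_mul_eq_smul] at hcoassoc
  simp only [TensorProduct.smul_tmul, ← TensorProduct.tmul_sum, sum_counit_smul] at hcoassoc
  rw [hcoassoc]
  refine Finset.sum_congr rfl fun i _ ↦ ?_
  rw [← (ℛ R (𝓡.right i)).eq, Finset.mul_sum]
  simp only [Algebra.TensorProduct.tmul_mul_tmul, one_mul]

end HopfAlgebra

namespace TensorProduct

variable {R A B : Type*} [CommSemiring R] [Semiring A] [Algebra R A] [Semiring B] [Algebra R B]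

lemma lid_map_id_tmul_one_mul (f : A →ₗ[R] R) (a : A) (z : A ⊗[R] B) :
    TensorProduct.lid R B (map f LinearMap.id ((a ⊗ₜ 1) * z)) =
      TensorProduct.lid R B (map (f ∘ₗ LinearMap.mulLeft R a) LinearMap.id z) := by
  induction z using TensorProduct.induction_on with
  | zero => simp only [mul_zero, map_zero]
  | tmul x y => simp only [Algebra.TensorProduct.tmul_mul_tmul, one_mul, map_tmul, lid_tmul,
      LinearMap.comp_apply, LinearMap.mulLeft_apply]
  | add x y hx hy => simp only [mul_add, map_add, hx, hy]

lemma lid_map_id_one_tmul_mul (f : A →ₗ[R] R) (b : B) (z : A ⊗[R] B) :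
    TensorProduct.lid R B (map f LinearMap.id ((1 ⊗ₜ b) * z)) =
      b * TensorProduct.lid R B (map f LinearMap.id z) := by
  induction z using TensorProduct.induction_on with
  | zero => simp only [mul_zero, map_zero]
  | tmul x y => simp only [Algebra.TensorProduct.tmul_mul_tmul, one_mul, map_tmul, lid_tmul,
      LinearMap.id_apply, mul_smul_comm]
  | add x y hx hy => simp only [mul_add, map_add, hx, hy]

end TensorProduct

open Coalgebra HopfAlgebra in
lemma IsLeftIntegral.antipode_tmul_one_mul_comul {t : H} (ht : IsLeftIntegral (k := k) t)
    (h : H) : (antipode k h ⊗ₜ[k] 1) * comul t = (1 ⊗ₜ h) * comul (R := k) t := by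
  let 𝓡 := ℛ k h
  calc (antipode k h ⊗ₜ[k] 1) * comul t
      = ∑ i ∈ 𝓡.index, counit (R := k) (𝓡.right i) • ((antipode k (𝓡.left i) ⊗ₜ[k] 1) *
          comul t) := by
        conv_lhs => rw [← sum_counit_right_smul_left 𝓡]
        simp only [map_sum, map_smul, TensorProduct.sum_tmul, Finset.sum_mul,
          ← TensorProduct.smul_tmul', smul_mul_assoc]
    _ = ∑ i ∈ 𝓡.index, (antipode k (𝓡.left i) ⊗ₜ[k] 1) * comul (𝓡.right i * t) := by
        refine Finset.sum_congr rfl fun i _ ↦ ?_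
        rw [ht, map_smul, mul_smul_comm]
    _ = (1 ⊗ₜ h) * comul t := by
        simp_rw [Bialgebra.comul_mul, ← mul_assoc, ← Finset.sum_mul,
          sum_antipode_tmul_one_mul_comul]

lemma conv_apply_eq_apply_lid_map_id_comul (T f : H →ₗ[k] k) (x : H) :
    conv T f x =
      f (TensorProduct.lid k H (TensorProduct.map T LinearMap.id (Coalgebra.comul x))) := by
  change LinearMap.mul' k k (TensorProduct.map T f (Coalgebra.comul x)) = _
  induction Coalgebra.comul (R := k) x using TensorProduct.induction_on with
  | zero => simp only [map_zero]
  | tmul y z => simp only [TensorProduct.map_tmul, LinearMap.mul'_apply, TensorProduct.lid_tmul,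
      LinearMap.id_apply, map_smul, smul_eq_mul]
  | add y z hy hz => simp only [map_add, hy, hz]

lemma IsRightIntegralDual.lid_map_id_comul {T : H →ₗ[k] k} (hT : IsRightIntegralDual T) (x : H) :
    TensorProduct.lid k H (TensorProduct.map T LinearMap.id (Coalgebra.comul x)) = T x • 1 :=
  Module.eval_apply_injective k <| LinearMap.ext fun f ↦ by
    simp only [Module.Dual.eval_apply, ← conv_apply_eq_apply_lid_map_id_comul, hT f,
      LinearMap.smul_apply, map_smul, smul_eq_mul, mul_comm]

theorem integral_antipode_formula_general
    {k : Type*} [Field k] {H : Type*} [Ring H] [HopfAlgebra k H]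
    (T : H →ₗ[k] k) (t : H) (hT : IsRightIntegralDual T)
    (ht : IsLeftIntegral (k := k) t) (hTt : T t = 1) (h : H) :
    (TensorProduct.lid k H)
      (TensorProduct.map (T ∘ₗ LinearMap.mulLeft k (HopfAlgebra.antipode (R := k) h))
        LinearMap.id (Coalgebra.comul (R := k) t)) = h := by
  rw [← TensorProduct.lid_map_id_tmul_one_mul, ht.antipode_tmul_one_mul_comul,
    TensorProduct.lid_map_id_one_tmul_mul, hT.lid_map_id_comul, hTt, one_smul, mul_one]

/-- for `H` finite-dimensional, `T` a right integral in `H*` and `t` a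
left integral in `H` with `T(t) = 1`, one has `T(S(h)t₁)t₂ = h` for all `h`. -/
theorem integral_antipode_formula
    {k : Type*} [Field k] {H : Type*} [Ring H] [HopfAlgebra k H]
    [Module.Finite k H]
    (T : H →ₗ[k] k) (t : H) (hT : IsRightIntegralDual T)
    (ht : IsLeftIntegral (k := k) t) (hTt : T t = 1) (h : H) :
    (TensorProduct.lid k H)
      (TensorProduct.map (T ∘ₗ LinearMap.mulLeft k (HopfAlgebra.antipode (R := k) h))
        LinearMap.id (Coalgebra.comul (R := k) t)) = h :=
  integral_antipode_formula_general T t hT ht hTt h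

end
end

section
/- An element t ∈ H is a left integral (ht = ε(h)t for all h) if and only if t₁ ⊗ ht₂ = S(h)t₁ ⊗ t₂ for all h ∈ H. -/
open TensorProduct LinearMap

noncomputable section

variable (k : Type*) [Field k]
variable (H : Type*) [Ring H] [HopfAlgebra k H]
variable (A : Type*) [Ring A] [Algebra k A]

variable {k H A}

/-!
The map `a ⊗ b ↦ (S a ⊗ 1) Δ b` sends `Δ h` to `1 ⊗ h`, by coassociativity and the antipode
axiom. It sends `Δ h · (1 ⊗ t)` to `(1 ⊗ h) Δ t`; for a left integral `t` we have
`Δ h · (1 ⊗ t) = h ⊗ t`, which it sends to `(S h ⊗ 1) Δ t`. Conversely, applying `ε ⊗ id` to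
`t₁ ⊗ h t₂ = S(h) t₁ ⊗ t₂` gives `h t = ε(S h) t = ε(h) t`.
-/

open Coalgebra HopfAlgebra

section Coalgebra

variable {R C M : Type*} [CommSemiring R] [AddCommMonoid C] [Module R C] [Coalgebra R C]
  [AddCommMonoid M] [Module R M]

theorem rTensor_counit_map_id_comul (f : C →ₗ[R] M) (x : C) :
    counit.rTensor M (map LinearMap.id f (comul x)) = 1 ⊗ₜ f x := by
  rw [← lTensor, ← comp_apply, rTensor_comp_lTensor, ← lTensor_comp_rTensor, comp_apply,
    rTensor_counit_comul, lTensor_tmul]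

end Coalgebra

section Bialgebra

variable {R A : Type*} [CommSemiring R] [Semiring A] [Bialgebra R A]

theorem rTensor_counit_map_mulLeft_id_comul (a x : A) :
    counit.rTensor A (map (mulLeft R a) LinearMap.id (comul x)) =
      counit (R := R) a • (1 ⊗ₜ[R] x) := by
  have : counit ∘ₗ mulLeft R a = counit (R := R) a • counit := by ext; simp
  rw [← rTensor, ← rTensor_comp_apply, this, rTensor_smul, LinearMap.smul_apply,
    rTensor_counit_comul]

end Bialgebra

section HopfAlgebra

variable {R A : Type*} [CommSemiring R] [Semiring A] [HopfAlgebra R A]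

variable (R A) in
def antipodeMulComul : A ⊗[R] A →ₗ[R] A ⊗[R] A :=
  mul' R (A ⊗[R] A) ∘ₗ
    map ((Algebra.TensorProduct.includeLeft : A →ₐ[R] A ⊗[R] A).toLinearMap ∘ₗ antipode R) comul

@[simp] theorem antipodeMulComul_tmul (a b : A) :
    antipodeMulComul R A (a ⊗ₜ b) = (antipode R a ⊗ₜ 1) * comul b := by
  simp [antipodeMulComul]

theorem antipodeMulComul_lTensor_mulRight (t : A) (x : A ⊗[R] A) :
    antipodeMulComul R A ((mulRight R t).lTensor A x) = antipodeMulComul R A x * comul t := by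
  induction x using TensorProduct.induction_on with
  | zero => simp
  | tmul a b => simp [mul_assoc]
  | add x y hx hy => simp [add_mul, hx, hy]

theorem antipodeMulComul_eq :
    antipodeMulComul R A = map (mul' R A ∘ₗ (antipode R).rTensor A) LinearMap.id ∘ₗ
      (TensorProduct.assoc R A A A).symm.toLinearMap ∘ₗ comul.lTensor A := by
  ext a b
  simp only [AlgebraTensorModule.curry_apply, curry_apply, restrictScalars_apply, coe_comp,
    LinearEquiv.coe_coe, Function.comp_apply, lTensor_tmul, antipodeMulComul_tmul]
  induction comul (R := R) b using TensorProduct.induction_on with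
  | zero => simp
  | tmul c d => simp [Algebra.TensorProduct.tmul_mul_tmul]
  | add x y hx hy => simp [mul_add, tmul_add, hx, hy]

theorem antipodeMulComul_comul (a : A) : antipodeMulComul R A (comul a) = 1 ⊗ₜ a := by
  calc antipodeMulComul R A (comul a)
      = (mul' R A ∘ₗ (antipode R).rTensor A ∘ₗ comul).rTensor A (comul a) := by
        rw [antipodeMulComul_eq]
        simp [coassoc_symm_apply, rTensor, map_map, LinearMap.comp_assoc]
    _ = 1 ⊗ₜ a := by
        rw [mul_antipode_rTensor_comul, rTensor_comp_apply, rTensor_counit_comul]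
        simp

end HopfAlgebra

theorem IsLeftIntegral.lTensor_mulRight_comul {k H : Type*} [Field k] [Ring H] [HopfAlgebra k H]
    {t : H} (ht : IsLeftIntegral (k := k) t) (h : H) :
    (mulRight k t).lTensor H (comul h) = h ⊗ₜ t := by
  have : mulRight k t = toSpanSingleton k H t ∘ₗ counit := by ext; simp [ht _]
  rw [this, lTensor_comp_apply, lTensor_counit_comul]
  simp

/-- `t` is a left integral iff `t₁ ⊗ ht₂ = S(h)t₁ ⊗ t₂` for all `h`. -/
theorem leftIntegral_iff_twist
    {k : Type*} [Field k] {H : Type*} [Ring H] [HopfAlgebra k H] (t : H) :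
    IsLeftIntegral (k := k) t ↔
      ∀ h : H,
        TensorProduct.map LinearMap.id (LinearMap.mulLeft k h)
            (Coalgebra.comul (R := k) t) =
          TensorProduct.map (LinearMap.mulLeft k (HopfAlgebra.antipode (R := k) h))
            LinearMap.id (Coalgebra.comul (R := k) t) := by
  refine ⟨fun ht h => ?_, fun htwist h => ?_⟩
  · calc map LinearMap.id (mulLeft k h) (comul t)
        = mulLeft k ((1 : H) ⊗ₜ h) (comul t) := by rw [mulLeft_tmul, mulLeft_one]
      _ = antipodeMulComul k H (comul h) * comul t := by
          rw [mulLeft_apply, antipodeMulComul_comul]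
      _ = antipodeMulComul k H (h ⊗ₜ t) := by
          rw [← ht.lTensor_mulRight_comul h, antipodeMulComul_lTensor_mulRight]
      _ = mulLeft k (antipode k h ⊗ₜ (1 : H)) (comul t) := by
          rw [antipodeMulComul_tmul, mulLeft_apply]
      _ = _ := by rw [mulLeft_tmul, mulLeft_one]
  · have := congrArg (counit.rTensor H) (htwist h)
    rw [rTensor_counit_map_id_comul, rTensor_counit_map_mulLeft_id_comul, counit_antipode,
      ← tmul_smul] at this
    simpa using congrArg (TensorProduct.lid k H) this

end
end

section
/- If t ∈ H is a left integral and the antipode S of H is bijective, then S⁻¹(t₁) ⊗ ht₂ = S⁻¹(t₁)h ⊗ t₂ for all h ∈ H. -/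
open TensorProduct LinearMap

noncomputable section

variable (k : Type*) [Field k]
variable (H : Type*) [Ring H] [HopfAlgebra k H]
variable (A : Type*) [Ring A] [Algebra k A]

variable {k H A}

/-! Applying `S ⊗ id` turns the claim into `(S h ⊗ 1) Δt = (1 ⊗ h) Δt`, which holds for every
left integral `t`: both sides equal `∑ (S h₁ ⊗ 1) Δ(h₂ t)`, the first because `h₂ t = ε(h₂) t`,
the second because `Δ(h₂ t) = Δh₂ Δt` and `∑ S h₁ h₂ ⊗ h₃ = 1 ⊗ h`. Since `S⁻¹` is again
anti-multiplicative, `S⁻¹ ⊗ id` carries this back to the claim. -/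

open Coalgebra HopfAlgebra

lemma Coalgebra.sum_counit_right_smul_s10 {R C : Type*} [CommSemiring R] [AddCommMonoid C]
    [Module R C] [Coalgebra R C] {a : C} {ι : Type*} (r : Repr R a ι) :
    ∑ i ∈ r.index, counit (R := R) (r.right i) • r.left i = a := by
  simpa only [map_sum, rid_tmul, one_smul] using
    congrArg (_root_.TensorProduct.rid R C) (sum_tmul_counit_eq r)

namespace HopfAlgebra

variable {R A : Type*} [CommSemiring R] [Semiring A] [HopfAlgebra R A]

lemma sum_antipode_tmul_one_mul_comul_s10 {a : A} {ι : Type*} (r : Repr R a ι) :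
    ∑ i ∈ r.index, (antipode R (r.left i) ⊗ₜ[R] (1 : A)) * comul (r.right i) =
      (1 : A) ⊗ₜ[R] a := by
  let φ : A ⊗[R] (A ⊗[R] A) →ₗ[R] A ⊗[R] A :=
    (LinearMap.mul' R A ∘ₗ map (antipode R) LinearMap.id).rTensor A ∘ₗ
      (TensorProduct.assoc R A A A).symm.toLinearMap
  have hφ (x y z : A) : φ (x ⊗ₜ (y ⊗ₜ z)) = (antipode R x * y) ⊗ₜ z := rfl
  let r₁ (i : ι) := ℛ R (r.left i)
  let r₂ (i : ι) := ℛ R (r.right i)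
  calc ∑ i ∈ r.index, (antipode R (r.left i) ⊗ₜ[R] (1 : A)) * comul (r.right i)
      = φ (∑ i ∈ r.index, ∑ j ∈ (r₂ i).index,
          r.left i ⊗ₜ[R] ((r₂ i).left j ⊗ₜ[R] (r₂ i).right j)) := by
        simp only [map_sum, hφ, ← (r₂ _).eq, Finset.mul_sum,
          Algebra.TensorProduct.tmul_mul_tmul, one_mul]
    _ = φ (∑ i ∈ r.index, ∑ j ∈ (r₁ i).index,
          (r₁ i).left j ⊗ₜ[R] ((r₁ i).right j ⊗ₜ[R] r.right i)) := by
        rw [sum_tmul_tmul_eq r r₁ r₂]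
    _ = ∑ i ∈ r.index, (counit (R := R) (r.left i) • (1 : A)) ⊗ₜ[R] r.right i := by
        simp only [map_sum, hφ, ← sum_tmul, sum_antipode_mul_eq_smul]
    _ = (1 : A) ⊗ₜ[R] a := by
        simp only [smul_tmul, ← tmul_sum, sum_counit_smul]

theorem antipode_tmul_one_mul_comul_of_leftIntegral {t : A}
    (ht : ∀ h : A, h * t = counit (R := R) h • t) (h : A) :
    (antipode R h ⊗ₜ[R] (1 : A)) * comul t = ((1 : A) ⊗ₜ[R] h) * comul t := by
  let r := ℛ R h
  calc (antipode R h ⊗ₜ[R] (1 : A)) * comul t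
      = ∑ i ∈ r.index, (antipode R (r.left i) ⊗ₜ[R] (1 : A)) * comul (r.right i * t) := by
        conv_lhs => rw [← sum_counit_right_smul_s10 r]
        simp only [ht, map_sum, map_smul, sum_tmul, Finset.sum_mul, ← smul_tmul', smul_mul_assoc,
          mul_smul_comm]
    _ = ((1 : A) ⊗ₜ[R] h) * comul t := by
        simp only [Bialgebra.comul_mul, ← mul_assoc, ← Finset.sum_mul,
          sum_antipode_tmul_one_mul_comul_s10]

lemma map_mul_antidistrib_of_inverse_antipode (Sinv : A →ₗ[R] A)
    (hS1 : ∀ x, Sinv (antipode R x) = x) (hS2 : ∀ x, antipode R (Sinv x) = x) (x y : A) :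
    Sinv (x * y) = Sinv y * Sinv x := by
  conv_lhs => rw [← hS2 x, ← hS2 y, ← antipode_mul_antidistrib, hS1]

end HopfAlgebra

/-- if `t` is a left integral and the antipode is bijective (with inverse
`Sinv`), then `S⁻¹(t₁) ⊗ ht₂ = S⁻¹(t₁)h ⊗ t₂` for all `h`. -/
theorem leftIntegral_twist_inv
    {k : Type*} [Field k] {H : Type*} [Ring H] [HopfAlgebra k H]
    (t : H) (ht : IsLeftIntegral (k := k) t) (Sinv : H →ₗ[k] H)
    (hS1 : ∀ x : H, Sinv (HopfAlgebra.antipode (R := k) x) = x)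
    (hS2 : ∀ x : H, HopfAlgebra.antipode (R := k) (Sinv x) = x) (h : H) :
    TensorProduct.map Sinv (LinearMap.mulLeft k h) (Coalgebra.comul (R := k) t) =
      TensorProduct.map ((LinearMap.mulRight k h) ∘ₗ Sinv) LinearMap.id
        (Coalgebra.comul (R := k) t) := by
  have twist_left (z : H ⊗[k] H) :
      map Sinv (LinearMap.mulLeft k h) z = map Sinv LinearMap.id ((1 ⊗ₜ h) * z) := by
    induction z using TensorProduct.induction_on with
    | zero => simp
    | tmul x y => simp
    | add z w hz hw => simp only [map_add, mul_add, hz, hw]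
  have twist_right (z : H ⊗[k] H) :
      map (LinearMap.mulRight k h ∘ₗ Sinv) LinearMap.id z =
        map Sinv LinearMap.id ((antipode k h ⊗ₜ 1) * z) := by
    induction z using TensorProduct.induction_on with
    | zero => simp
    | tmul x y => simp [map_mul_antidistrib_of_inverse_antipode Sinv hS1 hS2, hS1]
    | add z w hz hw => simp only [map_add, mul_add, hz, hw]
  rw [twist_left, twist_right, antipode_tmul_one_mul_comul_of_leftIntegral ht]

end
end

section
/- Let A be a left partial H-module algebra with H finite-dimensional, 0 ≠ t ∈ H a left integral. The canonical map Can: A ⊗_{A^H} A → A⊗̲H*, Can(a⊗b) = ab⁰ ⊗̲ b¹, is surjective if and only if the map [,]: A⊗_{A^H} A → A#̲H, [a,b] = (a#̲1)(1#̲t)(b#̲1), is surjective. -/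
open TensorProduct LinearMap

noncomputable section

variable (k : Type*) [Field k]
variable (H : Type*) [Ring H] [HopfAlgebra k H]
variable (A : Type*) [Ring A] [Algebra k A]

variable {k H A}

section Induced

variable [Module.Finite k H]

/-- The induced right partial `H*`-coaction `ρ̄(a) = Σᵢ (hᵢ·a) ⊗ hᵢ*` (dual basis). -/
def PartialAction.rhoInd (α : PartialAction k H A) :
    A →ₗ[k] A ⊗[k] Module.Dual k H :=
  (TensorProduct.comm k (Module.Dual k H) A).toLinearMap
    ∘ₗ (dualTensorHomEquiv k H A).symm.toLinearMap ∘ₗ α.act.flip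

/-- Convolution on `H*` as a bilinear map. -/
def convB : Module.Dual k H →ₗ[k] Module.Dual k H →ₗ[k] Module.Dual k H :=
  (TensorProduct.mapBilinear (RingHom.id k) H H k k).compr₂
    ((LinearMap.llcomp k H (k ⊗[k] k) k (LinearMap.mul' k k))
      ∘ₗ ((LinearMap.llcomp k H (H ⊗[k] H) (k ⊗[k] k)).flip Coalgebra.comul))

/-- The reduced tensor product `A ⊗̲ H* = (A ⊗ H*) ρ̄(1) = {a 1⁰ ⊗ f ∗ 1¹}`. -/
def PartialAction.reducedTensor (α : PartialAction k H A) :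
    Set (A ⊗[k] Module.Dual k H) :=
  {z | ∃ (a : A) (f : Module.Dual k H),
    z = TensorProduct.map (LinearMap.mulLeft k a) (convB f) (α.rhoInd 1)}

end Induced

/-- The canonical map `Can : A ⊗ A → A ⊗̲ H*`, `a ⊗ b ↦ a b⁰ ⊗ b¹` (defined on the
`k`-tensor square, through which `A ⊗_{A^H} A` factors). -/
def PartialAction.canMap (α : PartialAction k H A) [Module.Finite k H] :
    A ⊗[k] A →ₗ[k] A ⊗[k] Module.Dual k H :=
  TensorProduct.lift
    (((LinearMap.llcomp k A (A ⊗[k] Module.Dual k H) (A ⊗[k] Module.Dual k H)).flip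
        α.rhoInd)
      ∘ₗ (((TensorProduct.mapBilinear (RingHom.id k) A (Module.Dual k H) A
            (Module.Dual k H)).flip LinearMap.id)
          ∘ₗ (LinearMap.mul k A)))

/-- The bracket map `[a, b] = (a #̲ 1)(1 #̲ t)(b #̲ 1)` (defined on the `k`-tensor
square, through which `A ⊗_{A^H} A` factors). -/
def PartialAction.brMap (α : PartialAction k H A) (t : H) :
    A ⊗[k] A →ₗ[k] A ⊗[k] H :=
  (TensorProduct.lift α.sm) ∘ₗ
    TensorProduct.map
      ((α.sm.flip (α.j ((1 : A) ⊗ₜ t))) ∘ₗ α.j ∘ₗ ((TensorProduct.mk k A H).flip 1))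
      (α.j ∘ₗ ((TensorProduct.mk k A H).flip 1))

section Aux
set_option synthInstance.maxHeartbeats 1000000
set_option maxHeartbeats 1000000

open Coalgebra

lemma sum_counit_smul_right {h : H} (r : Coalgebra.Repr k h ι) :
    ∑ i ∈ r.index, Coalgebra.counit (R := k) (r.left i) • r.right i = h := by
  have h1 := congrArg (TensorProduct.lid k H) (Coalgebra.sum_counit_tmul_eq r)
  rw [map_sum] at h1
  simpa only [TensorProduct.lid_tmul, one_smul] using h1

lemma sum_counit_smul_left {h : H} (r : Coalgebra.Repr k h ι) :
    ∑ i ∈ r.index, Coalgebra.counit (R := k) (r.right i) • r.left i = h := by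
  have h1 := congrArg (TensorProduct.rid k H) (Coalgebra.sum_tmul_counit_eq r)
  rw [map_sum] at h1
  simpa only [TensorProduct.rid_tmul, one_smul] using h1

/-- `Repr` of `1 : H`. -/
def oneRepr : Coalgebra.Repr k (1 : H) Unit where
  index := Finset.univ
  left := fun _ => 1
  right := fun _ => 1
  eq := by simp [Algebra.TensorProduct.one_def]

variable (α : PartialAction k H A)

lemma act_mul (a b : A) {h : H} (r : Coalgebra.Repr k h ι) :
    α.act h (a * b) = ∑ i ∈ r.index, α.act (r.left i) a * α.act (r.right i) b := by
  have h1 := LinearMap.congr_fun (α.pa1 a b) h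
  rw [LinearMap.comp_apply, LinearMap.comp_apply, ← r.eq] at h1
  simpa [map_sum] using h1

lemma psi_tmul (a : A) {h : H} (r : Coalgebra.Repr k h ι) :
    α.psi (h ⊗ₜ[k] a) = ∑ i ∈ r.index, α.act (r.left i) a ⊗ₜ[k] r.right i := by
  simp only [PartialAction.psi, LinearMap.coe_comp, Function.comp_apply, LinearEquiv.coe_coe,
    TensorProduct.map_tmul, LinearMap.id_coe, id_eq]
  rw [← r.eq, TensorProduct.sum_tmul]
  simp [map_sum]

lemma sm_tmul (a b : A) (g : H) {h : H} (r : Coalgebra.Repr k h ι) :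
    α.sm (a ⊗ₜ[k] h) (b ⊗ₜ[k] g) =
      ∑ i ∈ r.index, (a * α.act (r.left i) b) ⊗ₜ[k] (r.right i * g) := by
  simp only [PartialAction.sm, TensorProduct.curry_apply, PartialAction.smashMul',
    LinearMap.coe_comp, Function.comp_apply, LinearEquiv.coe_coe, TensorProduct.assoc_tmul,
    TensorProduct.map_tmul, LinearMap.id_coe, id_eq, TensorProduct.assoc_symm_tmul,
    psi_tmul α b r]
  simp [map_sum, TensorProduct.sum_tmul, TensorProduct.tmul_sum]

lemma j_tmul (a : A) {h : H} (r : Coalgebra.Repr k h ι) :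
    α.j (a ⊗ₜ[k] h) = ∑ i ∈ r.index, (a * α.act (r.left i) (1 : A)) ⊗ₜ[k] r.right i := by
  simp only [PartialAction.j, LinearMap.flip_apply, PartialAction.unit, sm_tmul α a 1 1 r,
    mul_one]

lemma j_tmul_one (a : A) : α.j (a ⊗ₜ[k] (1 : H)) = a ⊗ₜ[k] (1 : H) := by
  rw [j_tmul α a (oneRepr (k := k) (H := H))]
  simp [oneRepr, α.pa2]

lemma thetaMap_apply (t : H) (f : H →ₗ[k] k) (r : Coalgebra.Repr k t ι) :
    thetaMap (k := k) t f = ∑ i ∈ r.index, f (r.left i) • r.right i := by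
  simp only [thetaMap, LinearMap.coe_comp, Function.comp_apply, LinearEquiv.coe_coe,
    LinearMap.flip_apply, TensorProduct.mapBilinear_apply, LinearMap.applyₗ_apply_apply]
  rw [← r.eq, map_sum, map_sum]
  simp

lemma convB_apply (f g : H →ₗ[k] k) (x : H) (r : Coalgebra.Repr k x ι) :
    convB f g x = ∑ i ∈ r.index, f (r.left i) * g (r.right i) := by
  simp only [convB, LinearMap.compr₂_apply, TensorProduct.mapBilinear_apply,
    LinearMap.coe_comp, Function.comp_apply, LinearMap.llcomp_apply, LinearMap.flip_apply]
  rw [← r.eq, map_sum, map_sum]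
  simp

/-- Key identity for a left integral: `Σ t₁ ⊗ h t₂ = Σ S(h) t₁ ⊗ t₂`. -/
lemma integral_shift {t : H} (ht : IsLeftIntegral (k := k) t) (h : H) :
    (1 ⊗ₜ[k] h) * Coalgebra.comul (R := k) t
      = (HopfAlgebra.antipode (R := k) h ⊗ₜ[k] 1) * Coalgebra.comul (R := k) t := by
  classical
  set S : H →ₗ[k] H := HopfAlgebra.antipode (R := k) with hS
  set r : Coalgebra.Repr k h (H × H) := ℛ k h with hr
  set a1 : (i : r.ι) → Coalgebra.Repr k (r.left i) (H × H) := fun i => ℛ k (r.left i) with ha1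
  set a2 : (i : r.ι) → Coalgebra.Repr k (r.right i) (H × H) := fun i => ℛ k (r.right i) with ha2
  have key := Coalgebra.sum_tmul_tmul_eq (R := k) r a1 a2
  -- the trilinear map Φ : x ⊗ (y ⊗ z) ↦ ((S x * y) ⊗ z) * Δt
  set Φ : H ⊗[k] (H ⊗[k] H) →ₗ[k] H ⊗[k] H :=
    (LinearMap.mulRight k (Coalgebra.comul (R := k) t))
      ∘ₗ (TensorProduct.map (LinearMap.mul' k H ∘ₗ (S.rTensor H)) LinearMap.id)
      ∘ₗ (TensorProduct.assoc k H H H).symm.toLinearMap with hΦ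
  have hΦt : ∀ (x y z : H), Φ (x ⊗ₜ[k] (y ⊗ₜ[k] z)) = ((S x * y) ⊗ₜ[k] z) * Coalgebra.comul (R := k) t := by
    intro x y z
    simp [hΦ, TensorProduct.assoc_symm_tmul]
  have key2 := congrArg Φ key
  rw [map_sum, map_sum] at key2
  simp only [map_sum, hΦt] at key2
  -- evaluate the left-hand side of key2
  have lhs : ∑ i ∈ r.index, ∑ j ∈ (a1 i).index,
      ((S ((a1 i).left j) * (a1 i).right j) ⊗ₜ[k] r.right i) * Coalgebra.comul (R := k) t
      = (1 ⊗ₜ[k] h) * Coalgebra.comul (R := k) t := by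
    have e1 : ∀ i ∈ r.index, ∑ j ∈ (a1 i).index,
        ((S ((a1 i).left j) * (a1 i).right j) ⊗ₜ[k] r.right i) * Coalgebra.comul (R := k) t
        = Coalgebra.counit (R := k) (r.left i) •
            ((1 ⊗ₜ[k] r.right i) * Coalgebra.comul (R := k) t) := by
      intro i _
      rw [← Finset.sum_mul, ← TensorProduct.sum_tmul,
        HopfAlgebra.sum_antipode_mul_eq_smul (a1 i)]
      rw [← TensorProduct.smul_tmul', smul_mul_assoc]
    rw [Finset.sum_congr rfl e1]
    have h2 : ∑ i ∈ r.index, Coalgebra.counit (R := k) (r.left i) • ((1:H) ⊗ₜ[k] r.right i)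
        = (1:H) ⊗ₜ[k] h := by
      simp_rw [← TensorProduct.tmul_smul]
      rw [← TensorProduct.tmul_sum, sum_counit_smul_right r]
    rw [← h2, Finset.sum_mul]
    simp only [smul_mul_assoc]
  -- evaluate the right-hand side of key2
  have rhs : ∑ i ∈ r.index, ∑ j ∈ (a2 i).index,
      ((S (r.left i) * (a2 i).left j) ⊗ₜ[k] (a2 i).right j) * Coalgebra.comul (R := k) t
      = (S h ⊗ₜ[k] 1) * Coalgebra.comul (R := k) t := by
    have e2 : ∀ i ∈ r.index, ∑ j ∈ (a2 i).index,
        ((S (r.left i) * (a2 i).left j) ⊗ₜ[k] (a2 i).right j) * Coalgebra.comul (R := k) t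
        = Coalgebra.counit (R := k) (r.right i) •
            ((S (r.left i) ⊗ₜ[k] (1:H)) * Coalgebra.comul (R := k) t) := by
      intro i _
      have e3 : ∀ j ∈ (a2 i).index,
          ((S (r.left i) * (a2 i).left j) ⊗ₜ[k] (a2 i).right j) * Coalgebra.comul (R := k) t
          = (S (r.left i) ⊗ₜ[k] (1:H)) *
              (((a2 i).left j ⊗ₜ[k] (a2 i).right j) * Coalgebra.comul (R := k) t) := by
        intro j _
        rw [← mul_assoc, Algebra.TensorProduct.tmul_mul_tmul, one_mul]
      rw [Finset.sum_congr rfl e3, ← Finset.mul_sum, ← Finset.sum_mul, (a2 i).eq]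
      rw [← Bialgebra.comul_mul, ht (r.right i), map_smul, mul_smul_comm]
    rw [Finset.sum_congr rfl e2]
    have h2 : ∑ i ∈ r.index, Coalgebra.counit (R := k) (r.right i) • (S (r.left i) ⊗ₜ[k] (1:H))
        = S h ⊗ₜ[k] (1:H) := by
      simp_rw [TensorProduct.smul_tmul', ← map_smul]
      rw [← TensorProduct.sum_tmul, ← map_sum, sum_counit_smul_left r]
    rw [← h2, Finset.sum_mul]
    simp only [smul_mul_assoc]
  rw [lhs, rhs] at key2
  exact key2

lemma counit_thetaMap (t : H) (f : H →ₗ[k] k) :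
    Coalgebra.counit (R := k) (thetaMap (k := k) t f) = f t := by
  set r := ℛ k t
  rw [thetaMap_apply t f r, map_sum]
  simp only [map_smul, smul_eq_mul]
  have h2 := congrArg f (sum_counit_smul_left r)
  rw [map_sum] at h2
  simp only [map_smul, smul_eq_mul] at h2
  rw [← h2]
  exact Finset.sum_congr rfl fun i _ => mul_comm _ _

lemma mul_thetaMap {t : H} (ht : IsLeftIntegral (k := k) t) (h : H) (f : H →ₗ[k] k) :
    h * thetaMap (k := k) t f
      = thetaMap (k := k) t (f ∘ₗ LinearMap.mulLeft k (HopfAlgebra.antipode (R := k) h)) := by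
  set r := ℛ k t with hr
  have star := integral_shift ht h
  rw [← r.eq, Finset.mul_sum, Finset.mul_sum] at star
  simp only [Algebra.TensorProduct.tmul_mul_tmul] at star
  simp only [one_mul, mul_one] at star
  have star2 := congrArg
    (fun z => (TensorProduct.lid k H) (TensorProduct.map f LinearMap.id z)) star
  simp only [map_sum, TensorProduct.map_tmul, LinearMap.id_coe, id_eq,
    TensorProduct.lid_tmul] at star2
  rw [thetaMap_apply t f r, Finset.mul_sum]
  simp only [mul_smul_comm]
  rw [star2, thetaMap_apply t _ r]
  simp

lemma basis_collapse {M : Type*} [AddCommMonoid M] [Module k M] {ι : Type*} [Fintype ι]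
    (b : Module.Basis ι k H) (u : H) (φ : H →ₗ[k] M) :
    ∑ m, b.coord m u • φ (b m) = φ u := by
  simp_rw [Module.Basis.coord_apply, ← map_smul, ← map_sum, Module.Basis.sum_repr]

lemma comul_thetaMap (t : H) {ι : Type*} [Fintype ι] (b : Module.Basis ι k H) (f : H →ₗ[k] k) :
    Coalgebra.comul (R := k) (thetaMap (k := k) t f)
      = ∑ m, b m ⊗ₜ[k] thetaMap (k := k) t (convB f (b.coord m)) := by
  classical
  set r := ℛ k t with hr
  set a1 : (i : r.ι) → Coalgebra.Repr k (r.left i) (H × H) := fun i => ℛ k (r.left i) with ha1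
  set a2 : (i : r.ι) → Coalgebra.Repr k (r.right i) (H × H) := fun i => ℛ k (r.right i) with ha2
  have key := Coalgebra.sum_tmul_tmul_eq (R := k) r a1 a2
  set V : H ⊗[k] (H ⊗[k] H) →ₗ[k] H ⊗[k] H :=
    (TensorProduct.lid k (H ⊗[k] H)).toLinearMap ∘ₗ (f.rTensor (H ⊗[k] H)) with hV
  have hVt : ∀ (x y z : H), V (x ⊗ₜ[k] (y ⊗ₜ[k] z)) = f x • (y ⊗ₜ[k] z) := by
    intro x y z; simp [hV]
  have key2 := congrArg V key
  simp only [map_sum, hVt] at key2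
  have hR : ∑ i ∈ r.index, ∑ j ∈ (a2 i).index,
      f (r.left i) • ((a2 i).left j ⊗ₜ[k] (a2 i).right j)
      = Coalgebra.comul (R := k) (thetaMap (k := k) t f) := by
    rw [thetaMap_apply t f r, map_sum]
    refine Finset.sum_congr rfl fun i _ => ?_
    rw [← Finset.smul_sum, (a2 i).eq, map_smul]
  have hL : ∑ m, b m ⊗ₜ[k] thetaMap (k := k) t (convB f (b.coord m))
      = ∑ i ∈ r.index, ∑ j ∈ (a1 i).index,
          f ((a1 i).left j) • ((a1 i).right j ⊗ₜ[k] r.right i) := by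
    have e1 : ∀ m, thetaMap (k := k) t (convB f (b.coord m))
        = ∑ i ∈ r.index, ∑ j ∈ (a1 i).index,
            (f ((a1 i).left j) * b.coord m ((a1 i).right j)) • r.right i := by
      intro m
      rw [thetaMap_apply t _ r]
      refine Finset.sum_congr rfl fun i _ => ?_
      rw [convB_apply f _ _ (a1 i), Finset.sum_smul]
    simp_rw [e1, TensorProduct.tmul_sum, TensorProduct.tmul_smul]
    rw [Finset.sum_comm]
    refine Finset.sum_congr rfl fun i _ => ?_
    rw [Finset.sum_comm]
    refine Finset.sum_congr rfl fun j _ => ?_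
    simp_rw [mul_smul]
    rw [← Finset.smul_sum]
    have hb := basis_collapse b ((a1 i).right j) ((TensorProduct.mk k H H).flip (r.right i))
    simp only [LinearMap.flip_apply, TensorProduct.mk_apply] at hb
    rw [hb]
  rw [hL, key2, hR]

section ThetaBij

variable [Module.Finite k H]

lemma thetaMap_surjective {t : H} (ht : IsLeftIntegral (k := k) t) (ht0 : t ≠ 0) :
    Function.Surjective (thetaMap (k := k) t) := by
  classical
  have hFD : FiniteDimensional k H := ‹Module.Finite k H›
  obtain ⟨f₀, hf₀⟩ : ∃ f : H →ₗ[k] k, f t ≠ 0 := by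
    by_contra hc
    push_neg at hc
    exact ht0 ((Module.forall_dual_apply_eq_zero_iff k t).mp fun φ => hc φ)
  set b := Module.Free.chooseBasis k H with hb
  have hmul : ∀ (h : H) (f : H →ₗ[k] k),
      ∃ g, thetaMap (k := k) t g = h * thetaMap (k := k) t f :=
    fun h f => ⟨_, (mul_thetaMap ht h f).symm⟩
  set x := thetaMap (k := k) t f₀ with hx
  have hεx : Coalgebra.counit (R := k) x = f₀ t := counit_thetaMap t f₀
  set rx : Coalgebra.Repr k x (Module.Free.ChooseBasisIndex k H) :=
    { index := (Finset.univ : Finset (Module.Free.ChooseBasisIndex k H)),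
      left := fun m => b m,
      right := fun m => thetaMap (k := k) t (convB f₀ (b.coord m)),
      eq := (comul_thetaMap t b f₀).symm } with hrx
  have h1 : ∑ m, HopfAlgebra.antipode (R := k) (b m) *
      thetaMap (k := k) t (convB f₀ (b.coord m)) = Coalgebra.counit (R := k) x • (1:H) := by
    have h0 := HopfAlgebra.sum_antipode_mul_eq_smul rx
    simpa [hrx] using h0
  have hmem : (Coalgebra.counit (R := k) x • (1:H)) ∈
      LinearMap.range (thetaMap (k := k) t) := by
    rw [← h1]
    refine Submodule.sum_mem _ fun m _ => ?_
    obtain ⟨g, hg⟩ := hmul (HopfAlgebra.antipode (R := k) (b m)) (convB f₀ (b.coord m))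
    exact ⟨g, hg⟩
  have hone : (1:H) ∈ LinearMap.range (thetaMap (k := k) t) := by
    have h3 := Submodule.smul_mem _ (Coalgebra.counit (R := k) x)⁻¹ hmem
    rwa [smul_smul, inv_mul_cancel₀ (by rw [hεx]; exact hf₀), one_smul] at h3
  obtain ⟨g1, hg1⟩ := hone
  intro y
  obtain ⟨g, hg⟩ := hmul y g1
  exact ⟨g, by rw [hg, hg1, mul_one]⟩

lemma thetaMap_bijective {t : H} (ht : IsLeftIntegral (k := k) t) (ht0 : t ≠ 0) :
    Function.Bijective (thetaMap (k := k) t) := by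
  have hFD : FiniteDimensional k H := ‹Module.Finite k H›
  have hsurj := thetaMap_surjective ht ht0
  refine ⟨?_, hsurj⟩
  rw [LinearMap.injective_iff_surjective_of_finrank_eq_finrank
    (Subspace.dual_finrank_eq (K := k) (V := H))]
  exact hsurj

end ThetaBij

section FinMain

variable [Module.Finite k H]

lemma dTHE_symm {ι : Type*} [Fintype ι] [DecidableEq ι] (b : Module.Basis ι k H) (g : H →ₗ[k] A) :
    (dualTensorHomEquiv k H A).symm g = ∑ m, b.coord m ⊗ₜ[k] g (b m) := by
  apply (dualTensorHomEquiv k H A).injective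
  rw [LinearEquiv.apply_symm_apply]
  have h0 : (dualTensorHomEquiv k H A) (∑ m, b.coord m ⊗ₜ[k] g (b m))
      = dualTensorHom k H A (∑ m, b.coord m ⊗ₜ[k] g (b m)) := by
    simp [dualTensorHomEquiv]
  rw [h0]
  ext h
  rw [map_sum]
  simp only [LinearMap.coe_sum, Finset.sum_apply, dualTensorHom_apply]
  exact (basis_collapse b h g).symm

variable (α : PartialAction k H A)

lemma rhoInd_apply {ι : Type*} [Fintype ι] [DecidableEq ι] (b : Module.Basis ι k H) (a : A) :
    α.rhoInd a = ∑ m, α.act (b m) a ⊗ₜ[k] b.coord m := by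
  simp only [PartialAction.rhoInd, LinearMap.coe_comp, Function.comp_apply,
    LinearEquiv.coe_coe]
  rw [dTHE_symm b (α.act.flip a), map_sum]
  simp [TensorProduct.comm_tmul, LinearMap.flip_apply]

lemma canMap_tmul {ι : Type*} [Fintype ι] [DecidableEq ι] (b : Module.Basis ι k H) (a c : A) :
    α.canMap (a ⊗ₜ[k] c) = ∑ m, (a * α.act (b m) c) ⊗ₜ[k] b.coord m := by
  simp only [PartialAction.canMap, TensorProduct.lift.tmul, LinearMap.coe_comp,
    Function.comp_apply, LinearMap.flip_apply, LinearMap.llcomp_apply,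
    TensorProduct.mapBilinear_apply]
  rw [rhoInd_apply α b c, map_sum]
  simp [LinearMap.mul_apply']

lemma brMap_tmul (t : H) (a c : A) (r : Coalgebra.Repr k t ι) :
    α.brMap t (a ⊗ₜ[k] c) = ∑ i ∈ r.index, (a * α.act (r.left i) c) ⊗ₜ[k] r.right i := by
  classical
  have h0 : α.brMap t (a ⊗ₜ[k] c)
      = α.sm (α.sm (α.j (a ⊗ₜ[k] (1:H))) (α.j ((1:A) ⊗ₜ[k] t))) (α.j (c ⊗ₜ[k] (1:H))) := by
    simp only [PartialAction.brMap, LinearMap.coe_comp, Function.comp_apply,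
      TensorProduct.map_tmul, TensorProduct.lift.tmul, LinearMap.flip_apply,
      TensorProduct.mk_apply]
  rw [h0, j_tmul_one, j_tmul_one, j_tmul α (1:A) r]
  simp only [one_mul]
  rw [map_sum]
  have h1 : ∀ i ∈ r.index, α.sm (a ⊗ₜ[k] (1:H)) (α.act (r.left i) 1 ⊗ₜ[k] r.right i)
      = (a * (α.act (r.left i) 1 : A)) ⊗ₜ[k] r.right i := by
    intro i _
    rw [sm_tmul α a _ _ (oneRepr (k := k) (H := H))]
    simp [oneRepr, α.pa2]
  rw [Finset.sum_congr rfl h1]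
  simp only [map_sum, LinearMap.sum_apply]
  set a1 : (i : r.ι) → Coalgebra.Repr k (r.left i) (H × H) := fun i => ℛ k (r.left i) with ha1
  set a2 : (i : r.ι) → Coalgebra.Repr k (r.right i) (H × H) := fun i => ℛ k (r.right i) with ha2
  have h2 : ∀ i ∈ r.index,
      α.sm ((a * α.act (r.left i) 1) ⊗ₜ[k] r.right i) (c ⊗ₜ[k] (1:H))
      = ∑ j ∈ (a2 i).index,
          ((a * α.act (r.left i) 1) * α.act ((a2 i).left j) c) ⊗ₜ[k] (a2 i).right j := by
    intro i _
    rw [sm_tmul α _ c 1 (a2 i)]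
    simp [mul_one]
  rw [Finset.sum_congr rfl h2]
  -- now the coassociativity + PA1 reduction
  have key := Coalgebra.sum_tmul_tmul_eq (R := k) r a1 a2
  set U : H ⊗[k] (H ⊗[k] H) →ₗ[k] A ⊗[k] H :=
    (TensorProduct.map ((LinearMap.mulLeft k a) ∘ₗ (LinearMap.mul' k A)
        ∘ₗ (TensorProduct.map (α.act.flip 1) (α.act.flip c))) LinearMap.id)
      ∘ₗ (TensorProduct.assoc k H H H).symm.toLinearMap with hU
  have hUt : ∀ (x y z : H), U (x ⊗ₜ[k] (y ⊗ₜ[k] z))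
      = (a * (α.act x 1 * α.act y c)) ⊗ₜ[k] z := by
    intro x y z
    simp [hU, TensorProduct.assoc_symm_tmul]
  have key2 := congrArg U key
  simp only [map_sum, hUt] at key2
  -- key2 : Σᵢ Σ_{j ∈ a1 i} (a * (act xⱼ 1 * act yⱼ c)) ⊗ vᵢ
  --      = Σᵢ Σ_{j ∈ a2 i} (a * (act uᵢ 1 * act xⱼ c)) ⊗ yⱼ
  have hLred : ∑ i ∈ r.index, ∑ j ∈ (a1 i).index,
      (a * (α.act ((a1 i).left j) 1 * α.act ((a1 i).right j) c)) ⊗ₜ[k] r.right i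
      = ∑ i ∈ r.index, (a * α.act (r.left i) c) ⊗ₜ[k] r.right i := by
    refine Finset.sum_congr rfl fun i _ => ?_
    rw [← TensorProduct.sum_tmul, ← Finset.mul_sum, ← act_mul α 1 c (a1 i), one_mul]
  simp only [mul_assoc]
  rw [← key2, hLred]

lemma brMap_eq (t : H) : α.brMap t = (thetaMap (k := k) t).lTensor A ∘ₗ α.canMap := by
  classical
  apply TensorProduct.ext'
  intro a c
  set b := Module.Free.chooseBasis k H with hb
  set r := ℛ k t with hr
  rw [LinearMap.comp_apply, canMap_tmul α b a c, map_sum, brMap_tmul α t a c r]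
  simp only [LinearMap.lTensor_tmul]
  have e1 : ∀ m, (a * α.act (b m) c) ⊗ₜ[k] thetaMap (k := k) t (b.coord m)
      = ∑ i ∈ r.index, b.coord m (r.left i) • ((a * α.act (b m) c) ⊗ₜ[k] r.right i) := by
    intro m
    rw [thetaMap_apply t _ r, TensorProduct.tmul_sum]
    simp [TensorProduct.tmul_smul]
  rw [Finset.sum_congr rfl (fun m _ => e1 m), Finset.sum_comm]
  refine Finset.sum_congr rfl fun i _ => ?_
  have hc := basis_collapse b (r.left i)
    (((TensorProduct.mk k A H).flip (r.right i)) ∘ₗ (LinearMap.mulLeft k a) ∘ₗ (α.act.flip c))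
  simp only [LinearMap.coe_comp, Function.comp_apply, LinearMap.flip_apply,
    TensorProduct.mk_apply, LinearMap.mulLeft_apply] at hc
  exact hc.symm

lemma key1 (t : H) (a : A) (f : H →ₗ[k] k) :
    (thetaMap (k := k) t).lTensor A
        (TensorProduct.map (LinearMap.mulLeft k a) (convB f) (α.rhoInd 1))
      = α.j (a ⊗ₜ[k] thetaMap (k := k) t f) := by
  classical
  set b := Module.Free.chooseBasis k H with hb
  set r := ℛ k t with hr
  set a1 : (i : r.ι) → Coalgebra.Repr k (r.left i) (H × H) := fun i => ℛ k (r.left i) with ha1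
  set a2 : (i : r.ι) → Coalgebra.Repr k (r.right i) (H × H) := fun i => ℛ k (r.right i) with ha2
  rw [rhoInd_apply α b 1, map_sum, map_sum]
  simp only [TensorProduct.map_tmul, LinearMap.lTensor_tmul, LinearMap.mulLeft_apply]
  -- LHS = Σ_m (a * act (b m) 1) ⊗ θ(convB f (coord m))
  have e1 : ∀ m, (a * α.act (b m) 1) ⊗ₜ[k] thetaMap (k := k) t (convB f (b.coord m))
      = ∑ i ∈ r.index, ∑ j ∈ (a1 i).index,
          (f ((a1 i).left j) * b.coord m ((a1 i).right j)) •
            ((a * α.act (b m) 1) ⊗ₜ[k] r.right i) := by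
    intro m
    rw [thetaMap_apply t _ r, TensorProduct.tmul_sum]
    refine Finset.sum_congr rfl fun i _ => ?_
    rw [convB_apply f _ _ (a1 i), Finset.sum_smul, TensorProduct.tmul_sum]
    simp [TensorProduct.tmul_smul]
  rw [Finset.sum_congr rfl (fun m _ => e1 m)]
  -- reorganize: Σ_m Σ_i Σ_j → Σ_i Σ_j (f xⱼ • Σ_m coord m yⱼ • (a * act (b m) 1) ⊗ vᵢ)
  rw [Finset.sum_comm]
  have e2 : ∀ i ∈ r.index, ∑ m, ∑ j ∈ (a1 i).index,
      (f ((a1 i).left j) * b.coord m ((a1 i).right j)) •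
        ((a * α.act (b m) 1) ⊗ₜ[k] r.right i)
      = ∑ j ∈ (a1 i).index,
          f ((a1 i).left j) • ((a * α.act ((a1 i).right j) 1) ⊗ₜ[k] r.right i) := by
    intro i _
    rw [Finset.sum_comm]
    refine Finset.sum_congr rfl fun j _ => ?_
    simp_rw [mul_smul]
    rw [← Finset.smul_sum]
    have hc := basis_collapse b ((a1 i).right j)
      (((TensorProduct.mk k A H).flip (r.right i)) ∘ₗ (LinearMap.mulLeft k a) ∘ₗ (α.act.flip (1:A)))
    simp only [LinearMap.coe_comp, Function.comp_apply, LinearMap.flip_apply,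
      TensorProduct.mk_apply, LinearMap.mulLeft_apply] at hc
    rw [hc]
  rw [Finset.sum_congr rfl e2]
  -- RHS = Σ_i f uᵢ • Σ_{j ∈ a2 i} (a * act xⱼ 1) ⊗ yⱼ
  have e3 : α.j (a ⊗ₜ[k] thetaMap (k := k) t f)
      = ∑ i ∈ r.index, ∑ j ∈ (a2 i).index,
          f (r.left i) • ((a * α.act ((a2 i).left j) 1) ⊗ₜ[k] (a2 i).right j) := by
    rw [thetaMap_apply t f r, TensorProduct.tmul_sum]
    simp_rw [TensorProduct.tmul_smul]
    rw [map_sum]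
    refine Finset.sum_congr rfl fun i _ => ?_
    rw [map_smul, j_tmul α a (a2 i), Finset.smul_sum]
  rw [e3]
  -- bridge by coassociativity
  have key := Coalgebra.sum_tmul_tmul_eq (R := k) r a1 a2
  set W : H ⊗[k] (H ⊗[k] H) →ₗ[k] A ⊗[k] H :=
    (TensorProduct.lid k (A ⊗[k] H)).toLinearMap
      ∘ₗ (f.rTensor (A ⊗[k] H))
      ∘ₗ ((TensorProduct.map ((LinearMap.mulLeft k a) ∘ₗ (α.act.flip (1:A)))
            LinearMap.id).lTensor H) with hW
  have hWt : ∀ (x y z : H), W (x ⊗ₜ[k] (y ⊗ₜ[k] z))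
      = f x • ((a * α.act y 1) ⊗ₜ[k] z) := by
    intro x y z
    simp [hW]
  have key2 := congrArg W key
  simp only [map_sum, hWt] at key2
  exact key2

end FinMain

end Aux

/-- the canonical map `Can : A ⊗_{A^H} A → A ⊗̲ H*` is surjective iff the
bracket map `[ , ] : A ⊗_{A^H} A → A #̲ H`, `a ⊗ b ↦ atb`, is surjective. -/
theorem canMap_surjective_iff_brMap_surjective (α : PartialAction k H A)
    [Module.Finite k H] (t : H) (ht : IsLeftIntegral (k := k) t) (ht0 : t ≠ 0) :
    (∀ z ∈ α.reducedTensor, ∃ w : A ⊗[k] A, α.canMap w = z) ↔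
      (∀ z ∈ α.smash, ∃ w : A ⊗[k] A, α.brMap t w = z) := by
  classical
  have hbij := thetaMap_bijective (H := H) ht ht0
  have hbr := brMap_eq α t
  constructor
  · intro hcan z hz
    rcases LinearMap.mem_range.mp hz with ⟨x, hx⟩
    obtain ⟨Sx, hSx⟩ := TensorProduct.exists_finset (R := k) x
    choose F hF using fun p : A × H => hbij.2 p.2
    have hz' : ∀ p : A × H, ∃ w, α.canMap w
        = TensorProduct.map (LinearMap.mulLeft k p.1) (convB (F p)) (α.rhoInd 1) :=
      fun p => hcan _ ⟨p.1, F p, rfl⟩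
    choose W hW using hz'
    refine ⟨∑ p ∈ Sx, W p, ?_⟩
    rw [hbr, LinearMap.comp_apply, map_sum, map_sum]
    have hterm : ∀ p ∈ Sx, (thetaMap (k := k) t).lTensor A (α.canMap (W p))
        = α.j (p.1 ⊗ₜ[k] p.2) := by
      intro p _
      rw [hW p, key1 α t p.1 (F p), hF p]
    rw [Finset.sum_congr rfl hterm, ← map_sum, ← hSx, hx]
  · intro hbrs z hz
    obtain ⟨a, f, hzf⟩ := hz
    obtain ⟨w, hw⟩ := hbrs (α.j (a ⊗ₜ[k] thetaMap (k := k) t f))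
      (LinearMap.mem_range.mpr ⟨a ⊗ₜ[k] thetaMap (k := k) t f, rfl⟩)
    refine ⟨w, ?_⟩
    have hinj : Function.Injective ((thetaMap (k := k) t).lTensor A) := by
      have h3 : (thetaMap (k := k) t).lTensor A
          = (TensorProduct.congr (LinearEquiv.refl k A)
              (LinearEquiv.ofBijective _ hbij)).toLinearMap := by
        apply TensorProduct.ext'
        intro x y
        simp [TensorProduct.congr_tmul]
      rw [h3]
      exact (TensorProduct.congr (LinearEquiv.refl k A)
        (LinearEquiv.ofBijective _ hbij)).injective
    apply hinj
    rw [← LinearMap.comp_apply, ← hbr, hw, hzf, key1 α t a f]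


end
end
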